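/- Let Φ be a positive, trace-preserving super-operator from m×m matrices to w×w matrices, and define the super-operator Φ_TA from m×m matrices to (w+1)×(w+1) matrices by letting Φ_TA[X] have Φ[X] as its top-left w×w block, the scalar −Tr(X) in the bottom-right corner entry, and zeros elsewhere. Then Φ_TA is Hermiticity-preserving and trace-annihilating, and for every bipartite state τ on ℂ^m ⊗ ℂ^n it holds that ‖(Φ_TA ⊗ id_n)[τ]‖_tr = 1 + ‖(Φ ⊗ id_n)[τ]‖_tr. -/

import Mathlib

open scoped Kronecker ComplexOrder Matrix

namespace ChannelDiscrimination

/-- The trace norm `Tr √(Aᴴ A)` of a complex square matrix. -/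
noncomputable def traceNorm {ι : Type*} [Fintype ι] [DecidableEq ι]
    (A : Matrix ι ι ℂ) : ℝ :=
  ((Matrix.posSemidef_conjTranspose_mul_self A).1.eigenvectorUnitary.1 *
      Matrix.diagonal (fun i => ((√((Matrix.posSemidef_conjTranspose_mul_self A).1.eigenvalues i) : ℝ) : ℂ)) *
      (star (Matrix.posSemidef_conjTranspose_mul_self A).1.eigenvectorUnitary :
        Matrix ι ι ℂ)).trace.re

/-- A state: a positive semidefinite matrix of trace one. -/
def IsState {ι : Type*} [Fintype ι] (ρ : Matrix ι ι ℂ) : Prop :=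
  ρ.PosSemidef ∧ ρ.trace = 1

/-- Separability of a bipartite matrix on `ℂ^m ⊗ ℂ^n`. -/
def IsSeparable {m n : ℕ} (σ : Matrix (Fin m × Fin n) (Fin m × Fin n) ℂ) : Prop :=
  ∃ (N : ℕ) (p : Fin N → ℝ) (ρ : Fin N → Matrix (Fin m) (Fin m) ℂ)
    (τ : Fin N → Matrix (Fin n) (Fin n) ℂ),
    (∀ i, 0 ≤ p i) ∧ (∑ i, p i = 1) ∧ (∀ i, IsState (ρ i)) ∧ (∀ i, IsState (τ i)) ∧
    σ = ∑ i, (p i : ℂ) • (ρ i ⊗ₖ τ i)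

/-- `Φ ⊗ id_n` for a super-operator `Φ` from `m×m` to `k×k` matrices. -/
def tensorId {m k : ℕ} (n : ℕ)
    (Φ : Matrix (Fin m) (Fin m) ℂ →ₗ[ℂ] Matrix (Fin k) (Fin k) ℂ) :
    Matrix (Fin m × Fin n) (Fin m × Fin n) ℂ →ₗ[ℂ]
      Matrix (Fin k × Fin n) (Fin k × Fin n) ℂ where
  toFun M := Matrix.of fun p q => Φ (Matrix.of fun i j => M (i, p.2) (j, q.2)) p.1 q.1
  map_add' M N := by
    ext p q
    show Φ ((Matrix.of fun i j => M (i, p.2) (j, q.2)) +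
        (Matrix.of fun i j => N (i, p.2) (j, q.2))) p.1 q.1 = _
    rw [map_add]
    rfl
  map_smul' c M := by
    ext p q
    show Φ (c • (Matrix.of fun i j => M (i, p.2) (j, q.2))) p.1 q.1 = _
    rw [map_smul]
    rfl

/-- A positive super-operator. -/
def IsPositiveMap {m k : ℕ}
    (Φ : Matrix (Fin m) (Fin m) ℂ →ₗ[ℂ] Matrix (Fin k) (Fin k) ℂ) : Prop :=
  ∀ X : Matrix (Fin m) (Fin m) ℂ, X.PosSemidef → (Φ X).PosSemidef

/-- A trace-preserving super-operator. -/
def IsTracePreserving {m k : ℕ}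
    (Φ : Matrix (Fin m) (Fin m) ℂ →ₗ[ℂ] Matrix (Fin k) (Fin k) ℂ) : Prop :=
  ∀ X : Matrix (Fin m) (Fin m) ℂ, (Φ X).trace = X.trace

/-- A completely positive super-operator: `Φ ⊗ id_n` is positive for every `n`. -/
def IsCompletelyPositive {m k : ℕ}
    (Φ : Matrix (Fin m) (Fin m) ℂ →ₗ[ℂ] Matrix (Fin k) (Fin k) ℂ) : Prop :=
  ∀ (n : ℕ) (M : Matrix (Fin m × Fin n) (Fin m × Fin n) ℂ),
    M.PosSemidef → (tensorId n Φ M).PosSemidef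

/-- A (quantum) channel: completely positive and trace-preserving. -/
def IsChannel {m k : ℕ}
    (Φ : Matrix (Fin m) (Fin m) ℂ →ₗ[ℂ] Matrix (Fin k) (Fin k) ℂ) : Prop :=
  IsCompletelyPositive Φ ∧ IsTracePreserving Φ

/-- An entanglement-breaking channel. -/
def IsEntanglementBreaking {m k : ℕ}
    (Φ : Matrix (Fin m) (Fin m) ℂ →ₗ[ℂ] Matrix (Fin k) (Fin k) ℂ) : Prop :=
  IsChannel Φ ∧ ∀ (n : ℕ) (ρ : Matrix (Fin m × Fin n) (Fin m × Fin n) ℂ),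
    IsState ρ → IsSeparable (tensorId n Φ ρ)

/-- `pad1 M c` is the `(k+1)×(k+1)` matrix with `M` as its top-left `k×k` block,
`c` in the bottom-right corner, and zeros elsewhere. -/
def pad1 {k : ℕ} (M : Matrix (Fin k) (Fin k) ℂ) (c : ℂ) :
    Matrix (Fin (k + 1)) (Fin (k + 1)) ℂ :=
  Matrix.of fun a b =>
    Fin.lastCases (Fin.lastCases c (fun _ => 0) b)
      (fun i => Fin.lastCases 0 (fun j => M i j) b) a

/-- Partial transpose on the first tensor factor. -/
def ptransposeFst {d n : ℕ} (ρ : Matrix (Fin d × Fin n) (Fin d × Fin n) ℂ) :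
    Matrix (Fin d × Fin n) (Fin d × Fin n) ℂ :=
  Matrix.of fun p q => ρ (q.1, p.2) (p.1, q.2)


/-!
A positive map sends Hermitian matrices, being differences of positive semidefinite ones, to
Hermitian matrices; by linearity it then commutes with `ᴴ`, and so does `Φ_TA`.

After reordering the basis of `ℂ^(w+1) ⊗ ℂ^n`, the matrix `(Φ_TA ⊗ id_n)[τ]` is block diagonal
with blocks `(Φ ⊗ id_n)[τ]` and `-Tr₁ τ`, where `Tr₁` is the partial trace over the first factor.
The trace norm only sees the spectrum of `Aᴴ A`, so it is invariant under reindexing and negation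
and additive over diagonal blocks, and on a positive semidefinite matrix it is the trace. Since
`Tr₁ τ` is again a state, its block contributes exactly `1`.
-/

open Matrix

section TraceNorm

variable {ι κ : Type*} [Fintype ι] [Fintype κ] [DecidableEq ι] [DecidableEq κ]

lemma traceNorm_eq_sum_sqrt_roots_charpoly (A : Matrix ι ι ℂ) :
    traceNorm A = (((Aᴴ * A).charpoly.roots).map fun z : ℂ => √z.re).sum := by
  have hH := (posSemidef_conjTranspose_mul_self A).1
  rw [traceNorm, hH.roots_charpoly_eq_eigenvalues, Multiset.map_map, trace_mul_cycle]
  simp [trace_diagonal, Function.comp_def]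

lemma traceNorm_eq_of_conjTranspose_mul_self_eq {A B : Matrix ι ι ℂ} (h : Aᴴ * A = Bᴴ * B) :
    traceNorm A = traceNorm B := by
  rw [traceNorm_eq_sum_sqrt_roots_charpoly, traceNorm_eq_sum_sqrt_roots_charpoly, h]

@[simp]
lemma traceNorm_neg (A : Matrix ι ι ℂ) : traceNorm (-A) = traceNorm A :=
  traceNorm_eq_of_conjTranspose_mul_self_eq (by simp)

@[simp]
lemma traceNorm_submatrix_equiv (A : Matrix ι ι ℂ) (e : κ ≃ ι) :
    traceNorm (A.submatrix e e) = traceNorm A := by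
  have hmul : (A.submatrix e e)ᴴ * A.submatrix e e = (Aᴴ * A).submatrix e e := by
    rw [conjTranspose_submatrix, submatrix_mul_equiv]
  have hcharpoly : ((Aᴴ * A).submatrix e e).charpoly = (Aᴴ * A).charpoly := by
    simpa using charpoly_reindex e.symm (Aᴴ * A)
  rw [traceNorm_eq_sum_sqrt_roots_charpoly, traceNorm_eq_sum_sqrt_roots_charpoly, hmul,
    hcharpoly]

lemma traceNorm_fromBlocks_zero (A : Matrix ι ι ℂ) (D : Matrix κ κ ℂ) :
    traceNorm (fromBlocks A 0 0 D) = traceNorm A + traceNorm D := by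
  have hmul : (fromBlocks A 0 0 D)ᴴ * fromBlocks A 0 0 D = fromBlocks (Aᴴ * A) 0 0 (Dᴴ * D) := by
    simp [fromBlocks_conjTranspose, fromBlocks_multiply]
  rw [traceNorm_eq_sum_sqrt_roots_charpoly, traceNorm_eq_sum_sqrt_roots_charpoly,
    traceNorm_eq_sum_sqrt_roots_charpoly, hmul, charpoly_fromBlocks_zero₁₂,
    Polynomial.roots_mul ((charpoly_monic _).mul (charpoly_monic _)).ne_zero,
    Multiset.map_add, Multiset.sum_add]

/-- For `A ≥ 0` we have `√(Aᴴ A) = √(A²) = A`. -/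
lemma _root_.Matrix.PosSemidef.traceNorm_eq_re_trace {A : Matrix ι ι ℂ} (hA : A.PosSemidef) :
    traceNorm A = A.trace.re := by
  have hcfc : traceNorm A = (cfc Real.sqrt (Aᴴ * A)).trace.re := by
    rw [(posSemidef_conjTranspose_mul_self A).1.cfc_eq]
    rfl
  have hsa : IsSelfAdjoint A := hA.1
  have hsq : Aᴴ * A = A ^ 2 := by rw [hA.1.eq, sq]
  have hsqrt_sq : cfc (fun x : ℝ => √(x ^ 2)) A = cfc (id : ℝ → ℝ) A := by
    refine cfc_congr fun x hx => ?_
    rw [hA.1.spectrum_real_eq_range_eigenvalues] at hx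
    obtain ⟨i, rfl⟩ := hx
    exact Real.sqrt_sq (hA.eigenvalues_nonneg i)
  rw [hcfc, hsq, ← cfc_comp_pow Real.sqrt 2 A (ha := hsa), hsqrt_sq, cfc_id ℝ A hsa]

end TraceNorm

section PartialTrace

variable {ι κ R : Type*} [Fintype ι]

def partialTraceFst [AddCommMonoid R] (τ : Matrix (ι × κ) (ι × κ) R) : Matrix κ κ R :=
  ∑ i, τ.submatrix (Prod.mk i) (Prod.mk i)

lemma partialTraceFst_apply [AddCommMonoid R] (τ : Matrix (ι × κ) (ι × κ) R) (p q : κ) :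
    partialTraceFst τ p q = ∑ i, τ (i, p) (i, q) := by
  simp [partialTraceFst, Matrix.sum_apply]

@[simp]
lemma trace_partialTraceFst [Fintype κ] [AddCommMonoid R] (τ : Matrix (ι × κ) (ι × κ) R) :
    (partialTraceFst τ).trace = τ.trace := by
  simp [partialTraceFst, trace, Matrix.sum_apply, Fintype.sum_prod_type_right]

lemma _root_.Matrix.PosSemidef.partialTraceFst [Fintype κ] [CommRing R] [PartialOrder R]
    [StarRing R] [StarOrderedRing R] {τ : Matrix (ι × κ) (ι × κ) R} (hτ : τ.PosSemidef) :
    (partialTraceFst τ).PosSemidef :=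
  posSemidef_sum _ fun i _ => hτ.submatrix (Prod.mk i)

end PartialTrace

section ConjTranspose

variable {A B : Type*} [AddCommGroup A] [Module ℂ A] [StarAddMonoid A] [StarModule ℂ A]
  [AddCommGroup B] [Module ℂ B] [StarAddMonoid B] [StarModule ℂ B]

open scoped ComplexStarModule in
lemma _root_.LinearMap.map_star_of_map_isSelfAdjoint (f : A →ₗ[ℂ] B)
    (hf : ∀ a, IsSelfAdjoint a → IsSelfAdjoint (f a)) (a : A) : f (star a) = star (f a) := by
  rw [← realPart_add_I_smul_imaginaryPart a]
  simp [(hf _ (ℜ a).2).star_eq, (hf _ (ℑ a).2).star_eq]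

end ConjTranspose

section PositiveMap

variable {m k : ℕ} {Φ : Matrix (Fin m) (Fin m) ℂ →ₗ[ℂ] Matrix (Fin k) (Fin k) ℂ}

open scoped MatrixOrder in
lemma IsPositiveMap.isHermitian_apply (hΦ : IsPositiveMap Φ) {H : Matrix (Fin m) (Fin m) ℂ}
    (hH : H.IsHermitian) : (Φ H).IsHermitian :=
  IsSelfAdjoint.map' hH <| PositiveLinearMap.mk₀ Φ fun X hX => by
    rw [nonneg_iff_posSemidef] at hX ⊢
    exact hΦ X hX

lemma IsPositiveMap.map_conjTranspose (hΦ : IsPositiveMap Φ) (X : Matrix (Fin m) (Fin m) ℂ) :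
    Φ Xᴴ = (Φ X)ᴴ :=
  Φ.map_star_of_map_isSelfAdjoint (fun _ => hΦ.isHermitian_apply) X

end PositiveMap

section Pad

variable {k : ℕ} (M : Matrix (Fin k) (Fin k) ℂ) (c : ℂ)

@[simp]
lemma pad1_castSucc_castSucc (i j : Fin k) : pad1 M c i.castSucc j.castSucc = M i j := by
  simp [pad1]

@[simp]
lemma pad1_last_last : pad1 M c (Fin.last k) (Fin.last k) = c := by
  simp [pad1]

@[simp]
lemma pad1_castSucc_last (i : Fin k) : pad1 M c i.castSucc (Fin.last k) = 0 := by
  simp [pad1]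

@[simp]
lemma pad1_last_castSucc (j : Fin k) : pad1 M c (Fin.last k) j.castSucc = 0 := by
  simp [pad1]

lemma pad1_conjTranspose : (pad1 M c)ᴴ = pad1 Mᴴ (star c) := by
  ext a b
  induction a using Fin.lastCases <;> induction b using Fin.lastCases <;> simp

lemma trace_pad1 : (pad1 M c).trace = M.trace + c := by
  simp [trace, Fin.sum_univ_castSucc]

end Pad

section BlockDecomposition

variable {m w : ℕ} {α : Type*}

def finSuccProdEquiv (w : ℕ) (α : Type*) : (Fin w × α) ⊕ α ≃ Fin (w + 1) × α where
  toFun := Sum.elim (fun ip => (ip.1.castSucc, ip.2)) (fun p => (Fin.last w, p))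
  invFun ip := Fin.lastCases (Sum.inr ip.2) (fun i => Sum.inl (i, ip.2)) ip.1
  left_inv := by rintro (⟨i, p⟩ | p) <;> simp
  right_inv := by
    rintro ⟨i, p⟩
    induction i using Fin.lastCases <;> simp

@[simp]
lemma finSuccProdEquiv_symm_castSucc (i : Fin w) (p : α) :
    (finSuccProdEquiv w α).symm (i.castSucc, p) = Sum.inl (i, p) := by
  simp [finSuccProdEquiv]

@[simp]
lemma finSuccProdEquiv_symm_last (p : α) :
    (finSuccProdEquiv w α).symm (Fin.last w, p) = Sum.inr p := by
  simp [finSuccProdEquiv]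

lemma tensorId_pad1_eq_submatrix_fromBlocks
    {Φ : Matrix (Fin m) (Fin m) ℂ →ₗ[ℂ] Matrix (Fin w) (Fin w) ℂ}
    {ΦTA : Matrix (Fin m) (Fin m) ℂ →ₗ[ℂ] Matrix (Fin (w + 1)) (Fin (w + 1)) ℂ}
    (hΦTA : ∀ X, ΦTA X = pad1 (Φ X) (-X.trace)) {n : ℕ}
    (τ : Matrix (Fin m × Fin n) (Fin m × Fin n) ℂ) :
    tensorId n ΦTA τ = (fromBlocks (tensorId n Φ τ) 0 0 (-partialTraceFst τ)).submatrix
      (finSuccProdEquiv w (Fin n)).symm (finSuccProdEquiv w (Fin n)).symm := by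
  ext ⟨a, p⟩ ⟨b, q⟩
  change ΦTA _ a b = _
  rw [hΦTA]
  induction a using Fin.lastCases <;> induction b using Fin.lastCases <;>
    simp [partialTraceFst_apply, trace, tensorId]

end BlockDecomposition

/-- From a positive trace-preserving `Φ`, the super-operator
`Φ_TA[X] = pad1 (Φ[X]) (−Tr X)` is Hermiticity-preserving and trace-annihilating,
and for every bipartite state `τ` it holds that
`‖(Φ_TA ⊗ id_n)[τ]‖_tr = 1 + ‖(Φ ⊗ id_n)[τ]‖_tr`. -/
theorem trace_annihilating_map_from_positive_trace_preserving
    {m w : ℕ} (Φ : Matrix (Fin m) (Fin m) ℂ →ₗ[ℂ] Matrix (Fin w) (Fin w) ℂ)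
    (hpos : IsPositiveMap Φ) (hTP : IsTracePreserving Φ)
    (ΦTA : Matrix (Fin m) (Fin m) ℂ →ₗ[ℂ] Matrix (Fin (w + 1)) (Fin (w + 1)) ℂ)
    (hΦTA : ∀ X : Matrix (Fin m) (Fin m) ℂ, ΦTA X = pad1 (Φ X) (-X.trace)) :
    (∀ X : Matrix (Fin m) (Fin m) ℂ, ΦTA Xᴴ = (ΦTA X)ᴴ) ∧
    (∀ X : Matrix (Fin m) (Fin m) ℂ, (ΦTA X).trace = 0) ∧
    ∀ (n : ℕ) (τ : Matrix (Fin m × Fin n) (Fin m × Fin n) ℂ), IsState τ →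
      traceNorm (tensorId n ΦTA τ) = 1 + traceNorm (tensorId n Φ τ) := by
  refine ⟨fun X => ?_, fun X => ?_, fun n τ ⟨hτ, htr⟩ => ?_⟩
  · rw [hΦTA, hΦTA, pad1_conjTranspose, hpos.map_conjTranspose, trace_conjTranspose, star_neg]
  · rw [hΦTA, trace_pad1, hTP, add_neg_cancel]
  · rw [tensorId_pad1_eq_submatrix_fromBlocks hΦTA, traceNorm_submatrix_equiv,
      traceNorm_fromBlocks_zero, traceNorm_neg, hτ.partialTraceFst.traceNorm_eq_re_trace,
      trace_partialTraceFst, htr, Complex.one_re, add_comm]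

end ChannelDiscrimination
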